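/- arXiv:1603.02467 — 3 statements merged into one kernel-verified Lean document; each statement's English description precedes it below -/
import Mathlib

section
/- Let g be a reversible 2-structure satisfying (U1) (every monochromatic digraph G_i(g) is a di-cograph) and (U2) (the triangle condition). Then every substructure of g induced on three vertices has a non-trivial module, i.e., is not prime. -/
/-- A 2-structure is modeled by a labeling `φ : V → V → Υ`; only values on
distinct pairs are relevant. A *module* of the 2-structure. -/
def IsModule {V Υ : Type*} (φ : V → V → Υ) (M : Set V) : Prop :=
  ∀ x ∈ M, ∀ y ∈ M, ∀ z ∉ M, φ x z = φ y z ∧ φ z x = φ z y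

/-- A graph-module of a digraph given by its arc relation `E`. -/
def IsGraphModule {V : Type*} (E : V → V → Prop) (M : Set V) : Prop :=
  ∀ x ∈ M, ∀ y ∈ M, ∀ z ∉ M, (E x z ↔ E y z) ∧ (E z x ↔ E z y)

/-- Two sets overlap: they intersect and neither contains the other. -/
def Overlap {V : Type*} (A B : Set V) : Prop :=
  (A ∩ B).Nonempty ∧ ¬ A ⊆ B ∧ ¬ B ⊆ A

/-- A (nonempty) module of a 2-structure. -/
def IsModuleNe {V Υ : Type*} (φ : V → V → Υ) (M : Set V) : Prop :=
  M.Nonempty ∧ IsModule φ M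

/-- A strong module: a module overlapping no other module. -/
def IsStrongModule {V Υ : Type*} (φ : V → V → Υ) (M : Set V) : Prop :=
  IsModuleNe φ M ∧ ∀ N : Set V, IsModuleNe φ N → ¬ Overlap M N

/-- The labeling of the reversible refinement `rev(g)`. -/
def revMap {V Υ : Type*} (φ : V → V → Υ) : V → V → Υ × Υ :=
  fun x y => (φ x y, φ y x)

/-- A 2-structure is reversible if equally labeled arcs have equally
labeled reverse arcs. -/
def Reversible {V Υ : Type*} (φ : V → V → Υ) : Prop :=
  ∀ x y a b : V, x ≠ y → a ≠ b → φ x y = φ a b → φ y x = φ b a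

/-- The unordered pair of labels on the two arcs between `u` and `v`. -/
def Dset {V Υ : Type*} (φ : V → V → Υ) (u v : V) : Set Υ :=
  {φ u v, φ v u}

/-- The triangle condition (U2). -/
def CondU2 {V Υ : Type*} (φ : V → V → Υ) : Prop :=
  ∀ x y z : V, x ≠ y → x ≠ z → y ≠ z →
    ({Dset φ x y, Dset φ x z, Dset φ y z} : Set (Set Υ)).ncard ≤ 2

/-- The monochromatic digraph `G_i(g)` with arcs labeled `i`. -/
def Ggraph {V Υ : Type*} (φ : V → V → Υ) (i : Υ) : V → V → Prop :=
  fun x y => x ≠ y ∧ φ x y = i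

/-- A relation on `Fin n` given by an explicit arc list. -/
def relOf {n : ℕ} (L : List (Fin n × Fin n)) : Fin n → Fin n → Prop :=
  fun k l => (k, l) ∈ L

/-- Forbidden digraph `D₃`: arcs (0,1),(1,2) only. -/
def FD3 : Fin 3 → Fin 3 → Prop := relOf [(0,1),(1,2)]
/-- Forbidden digraph `A`: an arc into an endpoint of a symmetric edge. -/
def FA : Fin 3 → Fin 3 → Prop := relOf [(0,1),(1,2),(2,1)]
/-- Forbidden digraph `B`: an arc out of an endpoint of a symmetric edge. -/
def FB : Fin 3 → Fin 3 → Prop := relOf [(0,1),(1,0),(1,2)]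
/-- Forbidden digraph `D̄₃`: the complement of `D₃`. -/
def FD3c : Fin 3 → Fin 3 → Prop := relOf [(1,0),(2,1),(0,2),(2,0)]
/-- Forbidden digraph `C₃`: a directed triangle. -/
def FC3 : Fin 3 → Fin 3 → Prop := relOf [(0,1),(1,2),(2,0)]
/-- Forbidden digraph `N`: arcs (1,0),(1,2),(3,2) only. -/
def FN : Fin 4 → Fin 4 → Prop := relOf [(1,0),(1,2),(3,2)]
/-- Forbidden digraph `N̄`: the complement of `N`. -/
def FNc : Fin 4 → Fin 4 → Prop :=
  relOf [(0,1),(2,1),(2,3),(0,2),(2,0),(0,3),(3,0),(1,3),(3,1)]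
/-- Forbidden digraph `P₄`: a symmetric path on four vertices. -/
def FP4 : Fin 4 → Fin 4 → Prop := relOf [(0,1),(1,0),(1,2),(2,1),(2,3),(3,2)]

/-- `E` contains the pattern `K` as an induced subgraph. -/
def HasInducedCopy {V : Type*} (E : V → V → Prop) {n : ℕ}
    (K : Fin n → Fin n → Prop) : Prop :=
  ∃ ι : Fin n → V, Function.Injective ι ∧
    ∀ k l : Fin n, k ≠ l → (E (ι k) (ι l) ↔ K k l)

/-- A di-cograph: a digraph with none of the eight forbidden induced
subgraphs `D₃, A, B, D̄₃, C₃, N̄, N, P₄`. -/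
def IsDiCograph {V : Type*} (E : V → V → Prop) : Prop :=
  ¬ HasInducedCopy E FD3 ∧ ¬ HasInducedCopy E FA ∧ ¬ HasInducedCopy E FB ∧
  ¬ HasInducedCopy E FD3c ∧ ¬ HasInducedCopy E FC3 ∧
  ¬ HasInducedCopy E FNc ∧ ¬ HasInducedCopy E FN ∧ ¬ HasInducedCopy E FP4

/-- Condition (U1): every monochromatic digraph is a di-cograph. -/
def CondU1 {V Υ : Type*} (φ : V → V → Υ) : Prop :=
  ∀ i : Υ, IsDiCograph (Ggraph φ i)

/-- `δ` is a symbolic ultrametric: (U1) and (U2). -/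
def SymbolicUltrametric {V Υ : Type*} (φ : V → V → Υ) : Prop :=
  CondU1 φ ∧ CondU2 φ

/-- A module of the induced substructure `g[X]`. -/
def IsModuleOn {V Υ : Type*} (φ : V → V → Υ) (X M : Set V) : Prop :=
  M ⊆ X ∧ ∀ x ∈ M, ∀ y ∈ M, ∀ z ∈ X \ M, φ x z = φ y z ∧ φ z x = φ z y

/-- The substructure `g[X]` is prime: all its modules are trivial. -/
def IsPrimeOn {V Υ : Type*} (φ : V → V → Υ) (X : Set V) : Prop :=
  ∀ M : Set V, IsModuleOn φ X M → M = ∅ ∨ (∃ v, M = {v}) ∨ M = X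

/-- Uniformly non-prime: no induced substructure on ≥ 3 vertices is prime. -/
def Unp {V Υ : Type*} (φ : V → V → Υ) : Prop :=
  ∀ X : Set V, 3 ≤ X.ncard → ¬ IsPrimeOn φ X

/-- A (nonempty) graph-module of a digraph. -/
def IsGraphModuleNe {V : Type*} (E : V → V → Prop) (M : Set V) : Prop :=
  M.Nonempty ∧ IsGraphModule E M

/-- A strong graph-module of a digraph. -/
def IsStrongGraphModule {V : Type*} (E : V → V → Prop) (M : Set V) : Prop :=
  IsGraphModuleNe E M ∧ ∀ N : Set V, IsGraphModuleNe E N → ¬ Overlap M N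

/-- The subgraph induced on `M` is (weakly) connected. -/
def ConnectedOn {V : Type*} (E : V → V → Prop) (M : Set V) : Prop :=
  ∀ x ∈ M, ∀ y ∈ M,
    Relation.ReflTransGen (fun a b => a ∈ M ∧ b ∈ M ∧ (E a b ∨ E b a)) x y

/-- `M` is a 1-cluster of (the cotree of) the di-cograph `E`: a strong module
with at least two vertices whose cotree vertex is series or order, i.e. whose
induced subgraph is weakly connected. -/
def IsOneCluster {V : Type*} (E : V → V → Prop) (M : Set V) : Prop :=
  IsStrongGraphModule E M ∧ 2 ≤ M.ncard ∧ ConnectedOn E M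

/-- `C¹(g)`: all 1-clusters of the monochromatic di-cographs together with
all singletons. -/
def OneClusters {V Υ : Type*} (φ : V → V → Υ) : Set (Set V) :=
  {M | (∃ i : Υ, IsOneCluster (Ggraph φ i) M) ∨ ∃ v : V, M = {v}}

/-- `M` is the least common ancestor module of `x` and `y`: the minimal strong
module of `g` containing both. -/
def IsLcaModule {V Υ : Type*} (φ : V → V → Υ) (x y : V) (M : Set V) : Prop :=
  IsStrongModule φ M ∧ x ∈ M ∧ y ∈ M ∧
    ∀ N : Set V, IsStrongModule φ N → x ∈ N → y ∈ N → M ⊆ N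

/-!
If some vertex `x` of a triple sees the other two, `y` and `z`, with the same label, then by
reversibility it is also seen by them with the same label, so `{y, z}` is a module. Otherwise
(U2) forces two of the three label pairs to coincide, say `D_ab = D_ac`; as `a` distinguishes
`b` from `c`, the label `i = φ a b` is also `φ c a`, and `c → a → b` is a one-way path in
`G_i(g)`. Since `G_i(g)` contains neither `D₃` nor `C₃`, one-way paths are shortcut, so
`φ c b = i = φ c a` and `c` does not distinguish `a` from `b` after all.
-/

namespace IsDiCograph

variable {V : Type*} {E : V → V → Prop}

theorem trans_of_oneway (hE : IsDiCograph E) {x y z : V}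
    (hxy : x ≠ y) (hxz : x ≠ z) (hyz : y ≠ z)
    (hexy : E x y) (heyz : E y z) (hyx : ¬ E y x) (hzy : ¬ E z y) : E x z := by
  have hinj : Function.Injective ![x, y, z] := by
    intro k l h
    fin_cases k <;> fin_cases l <;> simp_all [eq_comm]
  by_contra hxz'
  by_cases hzx : E z x
  · refine hE.2.2.2.2.1 ⟨![x, y, z], hinj, fun k l hkl => ?_⟩
    fin_cases k <;> fin_cases l <;> simp_all [FC3, relOf]
  · refine hE.1 ⟨![x, y, z], hinj, fun k l hkl => ?_⟩
    fin_cases k <;> fin_cases l <;> simp_all [FD3, relOf]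

end IsDiCograph

section ThreeVertices

variable {V Υ : Type*} {φ : V → V → Υ}

theorem dset_comm (φ : V → V → Υ) (u v : V) : Dset φ u v = Dset φ v u :=
  Set.pair_comm _ _

theorem isModuleOn_pair_of_eq (hrev : Reversible φ) {x y z : V}
    (hxy : x ≠ y) (hxz : x ≠ z) (h : φ x y = φ x z) :
    IsModuleOn φ {x, y, z} {y, z} := by
  have h' : φ y x = φ z x := hrev x y x z hxy hxz h
  refine ⟨Set.subset_insert _ _, ?_⟩
  rintro p hp q hq w ⟨hw, hwyz⟩
  obtain rfl : w = x := by simpa [hwyz] using hw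
  rcases hp with rfl | rfl <;> rcases hq with rfl | rfl <;> simp [h, h']

theorem CondU2.dset_eq_or_dset_eq_or_dset_eq (hU2 : CondU2 φ) {a b c : V}
    (hab : a ≠ b) (hac : a ≠ c) (hbc : b ≠ c) :
    Dset φ a b = Dset φ a c ∨ Dset φ a b = Dset φ b c ∨ Dset φ a c = Dset φ b c := by
  by_contra! h
  have := hU2 a b c hab hac hbc
  rw [Set.ncard_eq_three.mpr ⟨_, _, _, h.1, h.2.1, h.2.2, rfl⟩] at this
  omega

theorem CondU1.eq_of_dset_eq (hU1 : CondU1 φ) {a b c : V} (hab : a ≠ b) (hac : a ≠ c)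
    (hbc : b ≠ c) (ha : φ a b ≠ φ a c) (hD : Dset φ a b = Dset φ a c) :
    φ c a = φ c b := by
  obtain ⟨hca, hba⟩ : φ a b = φ c a ∧ φ b a = φ a c := by
    simpa [Dset, Set.pair_eq_pair_iff, ha] using hD
  have hpath : Ggraph φ (φ a b) c b :=
    (hU1 (φ a b)).trans_of_oneway hac.symm hbc.symm hab ⟨hac.symm, hca.symm⟩ ⟨hab, rfl⟩
      (fun h => ha h.2.symm) (fun h => ha (hba ▸ h.2).symm)
  exact hca.symm.trans hpath.2.symm

theorem CondU1.eq_or_eq_or_eq (hU1 : CondU1 φ) (hU2 : CondU2 φ) {a b c : V}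
    (hab : a ≠ b) (hac : a ≠ c) (hbc : b ≠ c) :
    φ a b = φ a c ∨ φ b a = φ b c ∨ φ c a = φ c b := by
  by_contra! h
  obtain ⟨ha, hb, hc⟩ := h
  rcases hU2.dset_eq_or_dset_eq_or_dset_eq hab hac hbc with hD | hD | hD
  · exact hc (hU1.eq_of_dset_eq hab hac hbc ha hD)
  · exact hc (hU1.eq_of_dset_eq hab.symm hbc hac hb (by rwa [dset_comm])).symm
  · exact hb (hU1.eq_of_dset_eq hac.symm hbc.symm hab hc
      (by rwa [dset_comm φ c a, dset_comm φ c b])).symm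

end ThreeVertices

/-- For a reversible 2-structure satisfying (U1) and (U2), every induced
substructure on three vertices is non-prime: it has a module of size two. -/
theorem three_vertex_nonprime {V Υ : Type*} (φ : V → V → Υ)
    (hrev : Reversible φ) (hU1 : CondU1 φ) (hU2 : CondU2 φ) :
    ∀ a b c : V, a ≠ b → a ≠ c → b ≠ c →
      ∃ M : Set V, M ⊆ {a, b, c} ∧ M.ncard = 2 ∧
        IsModuleOn φ ({a, b, c} : Set V) M := by
  intro a b c hab hac hbc
  rcases hU1.eq_or_eq_or_eq hU2 hab hac hbc with h | h | h
  · exact ⟨{b, c}, Set.subset_insert _ _, Set.ncard_pair hbc,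
      isModuleOn_pair_of_eq hrev hab hac h⟩
  · have hM := isModuleOn_pair_of_eq hrev hab.symm hbc h
    rw [Set.insert_comm] at hM
    exact ⟨{a, c}, hM.1, Set.ncard_pair hac, hM⟩
  · have hM := isModuleOn_pair_of_eq hrev hac.symm hbc.symm h
    rw [Set.insert_comm, Set.pair_comm c b] at hM
    exact ⟨{a, b}, hM.1, Set.ncard_pair hab, hM⟩
end

section
/- Let g be a reversible 2-structure and suppose g is uniformly non-prime (every induced substructure on 3 or 4 vertices has a non-trivial module). Then for every label i, the digraph G_i(g) contains no induced D_3 (two arcs (a,b),(b,c) present with no arc between a and c in either direction), no induced C_3 (directed 3-cycle with no reverse arcs), no induced P_4 (undirected path on 4 vertices with all arcs symmetric), and no induced N. -/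
/-- Every induced substructure on 3 or 4 vertices has a non-trivial module. -/
def Unp34 {V Υ : Type*} (φ : V → V → Υ) : Prop :=
  ∀ X : Set V, (X.ncard = 3 ∨ X.ncard = 4) →
    ∃ M : Set V, IsModuleOn φ X M ∧ 2 ≤ M.ncard ∧ M ≠ X

def IsPrimePattern {n : ℕ} (K : Fin n → Fin n → Prop) : Prop :=
  ∀ s : Finset (Fin n), IsGraphModule K ↑s → s.card ≤ 1 ∨ s = Finset.univ

theorem IsModuleOn.ggraph_iff {V Υ : Type*} {φ : V → V → Υ} {X M : Set V}
    (hM : IsModuleOn φ X M) (i : Υ) {x y z : V} (hx : x ∈ M) (hy : y ∈ M)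
    (hz : z ∈ X \ M) :
    (Ggraph φ i x z ↔ Ggraph φ i y z) ∧ (Ggraph φ i z x ↔ Ggraph φ i z y) := by
  have hxz : x ≠ z := fun h => hz.2 (h ▸ hx)
  have hyz : y ≠ z := fun h => hz.2 (h ▸ hy)
  obtain ⟨hout, hin⟩ := hM.2 x hx y hy z hz
  simp only [Ggraph, hout, hin, ne_eq, hxz, hyz, Ne.symm hxz, Ne.symm hyz, not_false_eq_true,
    true_and, and_self]

theorem IsModuleOn.isGraphModule_preimage {V Υ : Type*} {φ : V → V → Υ} {i : Υ} {n : ℕ}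
    {K : Fin n → Fin n → Prop} {ι : Fin n → V}
    (hiso : ∀ k l : Fin n, k ≠ l → (Ggraph φ i (ι k) (ι l) ↔ K k l))
    {M : Set V} (hM : IsModuleOn φ (Set.range ι) M) :
    IsGraphModule K (ι ⁻¹' M) := by
  intro x hx y hy z hz
  have hz' : ι z ∈ Set.range ι \ M := ⟨Set.mem_range_self z, hz⟩
  have hxz : x ≠ z := fun h => hz (h ▸ hx)
  have hyz : y ≠ z := fun h => hz (h ▸ hy)
  obtain ⟨hout, hin⟩ := hM.ggraph_iff i hx hy hz'
  rw [← hiso x z hxz, ← hiso y z hyz, ← hiso z x hxz.symm, ← hiso z y hyz.symm]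
  exact ⟨hout, hin⟩

theorem not_hasInducedCopy_of_isPrimePattern {V Υ : Type*} {φ : V → V → Υ} (hunp : Unp34 φ)
    {n : ℕ} (hn : n = 3 ∨ n = 4) {K : Fin n → Fin n → Prop} (hK : IsPrimePattern K) (i : Υ) :
    ¬ HasInducedCopy (Ggraph φ i) K := by
  classical
  rintro ⟨ι, hinj, hiso⟩
  have hXcard : (Set.range ι).ncard = n := by
    rw [← Set.image_univ, Set.ncard_image_of_injective _ hinj, Set.ncard_univ, Nat.card_fin]
  obtain ⟨M, hM, hMcard, hMne⟩ := hunp (Set.range ι) (by rwa [hXcard])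
  let s : Finset (Fin n) := Finset.univ.filter (ι · ∈ M)
  have hs_coe : (↑s : Set (Fin n)) = ι ⁻¹' M := by ext; simp [s]
  have hM_image : ι '' ↑s = M := by
    rw [hs_coe, Set.image_preimage_eq_of_subset hM.1]
  rcases hK s (hs_coe ▸ hM.isGraphModule_preimage hiso) with hcard | huniv
  · rw [← hM_image, Set.ncard_image_of_injective _ hinj, Set.ncard_coe_finset] at hMcard
    omega
  · exact hMne (by rw [← hM_image, huniv, Finset.coe_univ, Set.image_univ])

instance {n : ℕ} (L : List (Fin n × Fin n)) : DecidableRel (relOf L) :=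
  fun k l => inferInstanceAs (Decidable ((k, l) ∈ L))

instance {n : ℕ} (K : Fin n → Fin n → Prop) [DecidableRel K] (s : Finset (Fin n)) :
    Decidable (IsGraphModule K ↑s) :=
  inferInstanceAs (Decidable (∀ x ∈ s, ∀ y ∈ s, ∀ z ∉ s, (K x z ↔ K y z) ∧ (K z x ↔ K z y)))

instance {n : ℕ} (K : Fin n → Fin n → Prop) [DecidableRel K] : Decidable (IsPrimePattern K) :=
  inferInstanceAs
    (Decidable (∀ s : Finset (Fin n), IsGraphModule K ↑s → s.card ≤ 1 ∨ s = Finset.univ))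

theorem isPrimePattern_FD3 : IsPrimePattern FD3 := by unfold FD3; decide

theorem isPrimePattern_FC3 : IsPrimePattern FC3 := by unfold FC3; decide

theorem isPrimePattern_FP4 : IsPrimePattern FP4 := by unfold FP4; decide

theorem isPrimePattern_FN : IsPrimePattern FN := by unfold FN; decide

theorem unp_no_forbidden_general {V Υ : Type*} (φ : V → V → Υ)
    (hunp : Unp34 φ) :
    ∀ i : Υ, ¬ HasInducedCopy (Ggraph φ i) FD3 ∧
      ¬ HasInducedCopy (Ggraph φ i) FC3 ∧
      ¬ HasInducedCopy (Ggraph φ i) FP4 ∧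
      ¬ HasInducedCopy (Ggraph φ i) FN := fun i =>
  ⟨not_hasInducedCopy_of_isPrimePattern hunp (.inl rfl) isPrimePattern_FD3 i,
    not_hasInducedCopy_of_isPrimePattern hunp (.inl rfl) isPrimePattern_FC3 i,
    not_hasInducedCopy_of_isPrimePattern hunp (.inr rfl) isPrimePattern_FP4 i,
    not_hasInducedCopy_of_isPrimePattern hunp (.inr rfl) isPrimePattern_FN i⟩

/-- If a reversible 2-structure is uniformly non-prime then no monochromatic
digraph contains an induced `D₃`, `C₃`, `P₄`, or `N`. -/
theorem unp_no_forbidden {V Υ : Type*} (φ : V → V → Υ)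
    (hrev : Reversible φ) (hunp : Unp34 φ) :
    ∀ i : Υ, ¬ HasInducedCopy (Ggraph φ i) FD3 ∧
      ¬ HasInducedCopy (Ggraph φ i) FC3 ∧
      ¬ HasInducedCopy (Ggraph φ i) FP4 ∧
      ¬ HasInducedCopy (Ggraph φ i) FN :=
  unp_no_forbidden_general φ hunp
end

section
/- Let g be a 2-structure satisfying (U2). Then every monochromatic digraph G_i(g) (i ∈ Υ) is a di-cograph if and only if every monochromatic digraph G_j(rev(g)) (j ∈ Υ_rev(g)) of the reversible refinement is a di-cograph. -/
/-!
An arc of `G_{(i,j)}(rev g)` is an arc of `G_i(g)` whose reverse arc is labelled `j`, so `G_i(g)`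
is the arc-disjoint union of the digraphs `G_{(i,j)}(rev g)`. In a forbidden subgraph of `G_i(g)`,
(U2) applied to its triangles forces the reverse labels of enough arcs to agree that a forbidden
subgraph (`D₃`, `C₃`, `N` or `P₄`) survives in a single `G_{(i,j)}(rev g)`; `A` and `B` violate
(U2) outright. Conversely `G_{(i,i)}(rev g)` is symmetric and `G_{(i,j)}(rev g)`, `i ≠ j`, has no
symmetric arc, which leaves `P₄`, respectively `D₃`, `C₃` and `N`. Their non-arcs carry labels
missing `i` or `j` (uniformly along the chords of a path, by (U2)), so the copy reappears in
`G_i(g)` or, reversed, in `G_j(g)`; only a `P₄` whose chords carry `i` one way turns into a `D̄₃` or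
an `N̄` of `G_i(g)`.
-/

section Patterns

variable {V : Type*}

theorem hasInducedCopy_fin3_iff {E : V → V → Prop} {K : Fin 3 → Fin 3 → Prop} :
    HasInducedCopy E K ↔ ∃ x y z, x ≠ y ∧ x ≠ z ∧ y ≠ z ∧
      (E x y ↔ K 0 1) ∧ (E x z ↔ K 0 2) ∧ (E y x ↔ K 1 0) ∧
      (E y z ↔ K 1 2) ∧ (E z x ↔ K 2 0) ∧ (E z y ↔ K 2 1) := by
  constructor
  · rintro ⟨ι, hι, h⟩
    exact ⟨ι 0, ι 1, ι 2, hι.ne (by decide), hι.ne (by decide), hι.ne (by decide),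
      h 0 1 (by decide), h 0 2 (by decide), h 1 0 (by decide),
      h 1 2 (by decide), h 2 0 (by decide), h 2 1 (by decide)⟩
  · rintro ⟨x, y, z, hxy, hxz, hyz, h⟩
    refine ⟨![x, y, z], ?_, ?_⟩
    · intro k l hkl
      fin_cases k <;> fin_cases l <;> simp_all [eq_comm]
    · intro k l hkl
      fin_cases k <;> fin_cases l <;> simp_all

theorem hasInducedCopy_fin4_iff {E : V → V → Prop} {K : Fin 4 → Fin 4 → Prop} :
    HasInducedCopy E K ↔ ∃ w x y z, w ≠ x ∧ w ≠ y ∧ w ≠ z ∧ x ≠ y ∧ x ≠ z ∧ y ≠ z ∧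
      (E w x ↔ K 0 1) ∧ (E w y ↔ K 0 2) ∧ (E w z ↔ K 0 3) ∧
      (E x w ↔ K 1 0) ∧ (E x y ↔ K 1 2) ∧ (E x z ↔ K 1 3) ∧
      (E y w ↔ K 2 0) ∧ (E y x ↔ K 2 1) ∧ (E y z ↔ K 2 3) ∧
      (E z w ↔ K 3 0) ∧ (E z x ↔ K 3 1) ∧ (E z y ↔ K 3 2) := by
  constructor
  · rintro ⟨ι, hι, h⟩
    exact ⟨ι 0, ι 1, ι 2, ι 3, hι.ne (by decide), hι.ne (by decide), hι.ne (by decide),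
      hι.ne (by decide), hι.ne (by decide), hι.ne (by decide),
      h 0 1 (by decide), h 0 2 (by decide), h 0 3 (by decide),
      h 1 0 (by decide), h 1 2 (by decide), h 1 3 (by decide),
      h 2 0 (by decide), h 2 1 (by decide), h 2 3 (by decide),
      h 3 0 (by decide), h 3 1 (by decide), h 3 2 (by decide)⟩
  · rintro ⟨w, x, y, z, hwx, hwy, hwz, hxy, hxz, hyz, h⟩
    refine ⟨![w, x, y, z], ?_, ?_⟩
    · intro k l hkl
      fin_cases k <;> fin_cases l <;> simp_all [eq_comm]
    · intro k l hkl
      fin_cases k <;> fin_cases l <;> simp_all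

theorem not_hasInducedCopy_of_symm {E : V → V → Prop} (hE : ∀ a b, E a b → E b a) {n : ℕ}
    {K : Fin n → Fin n → Prop} (hK : ∃ k l, K k l ∧ ¬K l k) : ¬HasInducedCopy E K := by
  rintro ⟨ι, -, h⟩
  obtain ⟨k, l, hkl, hlk⟩ := hK
  have hne : k ≠ l := by rintro rfl; exact hlk hkl
  exact hlk ((h l k hne.symm).1 (hE _ _ ((h k l hne).2 hkl)))

theorem not_hasInducedCopy_of_asymm {E : V → V → Prop} (hE : ∀ a b, E a b → ¬E b a) {n : ℕ}
    {K : Fin n → Fin n → Prop} (hK : ∃ k l, k ≠ l ∧ K k l ∧ K l k) : ¬HasInducedCopy E K := by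
  rintro ⟨ι, -, h⟩
  obtain ⟨k, l, hne, hkl, hlk⟩ := hK
  exact hE _ _ ((h k l hne).2 hkl) ((h l k hne.symm).2 hlk)

variable {Υ : Type*} {ψ : V → V → Υ} {c : Υ}

theorem hasInducedCopy_ggraph_fin3_iff {K : Fin 3 → Fin 3 → Prop} :
    HasInducedCopy (Ggraph ψ c) K ↔ ∃ x y z, x ≠ y ∧ x ≠ z ∧ y ≠ z ∧
      (ψ x y = c ↔ K 0 1) ∧ (ψ x z = c ↔ K 0 2) ∧ (ψ y x = c ↔ K 1 0) ∧
      (ψ y z = c ↔ K 1 2) ∧ (ψ z x = c ↔ K 2 0) ∧ (ψ z y = c ↔ K 2 1) := by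
  rw [hasInducedCopy_fin3_iff]
  refine exists₃_congr fun x y z => ?_
  simp +contextual [Ggraph, Ne.symm]

theorem hasInducedCopy_ggraph_fin4_iff {K : Fin 4 → Fin 4 → Prop} :
    HasInducedCopy (Ggraph ψ c) K ↔ ∃ w x y z, w ≠ x ∧ w ≠ y ∧ w ≠ z ∧ x ≠ y ∧ x ≠ z ∧ y ≠ z ∧
      (ψ w x = c ↔ K 0 1) ∧ (ψ w y = c ↔ K 0 2) ∧ (ψ w z = c ↔ K 0 3) ∧
      (ψ x w = c ↔ K 1 0) ∧ (ψ x y = c ↔ K 1 2) ∧ (ψ x z = c ↔ K 1 3) ∧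
      (ψ y w = c ↔ K 2 0) ∧ (ψ y x = c ↔ K 2 1) ∧ (ψ y z = c ↔ K 2 3) ∧
      (ψ z w = c ↔ K 3 0) ∧ (ψ z x = c ↔ K 3 1) ∧ (ψ z y = c ↔ K 3 2) := by
  rw [hasInducedCopy_fin4_iff]
  refine exists₄_congr fun w x y z => ?_
  simp +contextual [Ggraph, Ne.symm]

theorem hasInducedCopy_FD3_iff : HasInducedCopy (Ggraph ψ c) FD3 ↔ ∃ x y z,
    x ≠ y ∧ x ≠ z ∧ y ≠ z ∧
    ψ x y = c ∧ ψ x z ≠ c ∧ ψ y x ≠ c ∧ ψ y z = c ∧ ψ z x ≠ c ∧ ψ z y ≠ c := by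
  simp [hasInducedCopy_ggraph_fin3_iff, FD3, relOf]

theorem hasInducedCopy_FA_iff : HasInducedCopy (Ggraph ψ c) FA ↔ ∃ x y z,
    x ≠ y ∧ x ≠ z ∧ y ≠ z ∧
    ψ x y = c ∧ ψ x z ≠ c ∧ ψ y x ≠ c ∧ ψ y z = c ∧ ψ z x ≠ c ∧ ψ z y = c := by
  simp [hasInducedCopy_ggraph_fin3_iff, FA, relOf]

theorem hasInducedCopy_FB_iff : HasInducedCopy (Ggraph ψ c) FB ↔ ∃ x y z,
    x ≠ y ∧ x ≠ z ∧ y ≠ z ∧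
    ψ x y = c ∧ ψ x z ≠ c ∧ ψ y x = c ∧ ψ y z = c ∧ ψ z x ≠ c ∧ ψ z y ≠ c := by
  simp [hasInducedCopy_ggraph_fin3_iff, FB, relOf]

theorem hasInducedCopy_FD3c_iff : HasInducedCopy (Ggraph ψ c) FD3c ↔ ∃ x y z,
    x ≠ y ∧ x ≠ z ∧ y ≠ z ∧
    ψ x y ≠ c ∧ ψ x z = c ∧ ψ y x = c ∧ ψ y z ≠ c ∧ ψ z x = c ∧ ψ z y = c := by
  simp [hasInducedCopy_ggraph_fin3_iff, FD3c, relOf]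

theorem hasInducedCopy_FC3_iff : HasInducedCopy (Ggraph ψ c) FC3 ↔ ∃ x y z,
    x ≠ y ∧ x ≠ z ∧ y ≠ z ∧
    ψ x y = c ∧ ψ x z ≠ c ∧ ψ y x ≠ c ∧ ψ y z = c ∧ ψ z x = c ∧ ψ z y ≠ c := by
  simp [hasInducedCopy_ggraph_fin3_iff, FC3, relOf]

theorem hasInducedCopy_FN_iff : HasInducedCopy (Ggraph ψ c) FN ↔ ∃ w x y z,
    w ≠ x ∧ w ≠ y ∧ w ≠ z ∧ x ≠ y ∧ x ≠ z ∧ y ≠ z ∧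
    ψ w x ≠ c ∧ ψ w y ≠ c ∧ ψ w z ≠ c ∧ ψ x w = c ∧ ψ x y = c ∧ ψ x z ≠ c ∧
    ψ y w ≠ c ∧ ψ y x ≠ c ∧ ψ y z ≠ c ∧ ψ z w ≠ c ∧ ψ z x ≠ c ∧ ψ z y = c := by
  simp [hasInducedCopy_ggraph_fin4_iff, FN, relOf]

theorem hasInducedCopy_FNc_iff : HasInducedCopy (Ggraph ψ c) FNc ↔ ∃ w x y z,
    w ≠ x ∧ w ≠ y ∧ w ≠ z ∧ x ≠ y ∧ x ≠ z ∧ y ≠ z ∧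
    ψ w x = c ∧ ψ w y = c ∧ ψ w z = c ∧ ψ x w ≠ c ∧ ψ x y ≠ c ∧ ψ x z = c ∧
    ψ y w = c ∧ ψ y x = c ∧ ψ y z = c ∧ ψ z w = c ∧ ψ z x = c ∧ ψ z y ≠ c := by
  simp [hasInducedCopy_ggraph_fin4_iff, FNc, relOf]

theorem hasInducedCopy_FP4_iff : HasInducedCopy (Ggraph ψ c) FP4 ↔ ∃ w x y z,
    w ≠ x ∧ w ≠ y ∧ w ≠ z ∧ x ≠ y ∧ x ≠ z ∧ y ≠ z ∧
    ψ w x = c ∧ ψ w y ≠ c ∧ ψ w z ≠ c ∧ ψ x w = c ∧ ψ x y = c ∧ ψ x z ≠ c ∧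
    ψ y w ≠ c ∧ ψ y x = c ∧ ψ y z = c ∧ ψ z w ≠ c ∧ ψ z x ≠ c ∧ ψ z y = c := by
  simp [hasInducedCopy_ggraph_fin4_iff, FP4, relOf]

end Patterns

section TwoStructure

variable {V Υ : Type*} {φ : V → V → Υ} {i j : Υ} {u v w x y z : V}

@[simp] theorem revMap_eq_iff : revMap φ u v = (i, j) ↔ φ u v = i ∧ φ v u = j := Prod.ext_iff

theorem ggraph_revMap_symm (a b : V) :
    Ggraph (revMap φ) (i, i) a b → Ggraph (revMap φ) (i, i) b a := by
  rintro ⟨hab, h⟩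
  exact ⟨hab.symm, by simp_all⟩

theorem ggraph_revMap_asymm (hij : i ≠ j) (a b : V) :
    Ggraph (revMap φ) (i, j) a b → ¬Ggraph (revMap φ) (i, j) b a := by
  rintro ⟨-, h⟩ ⟨-, h'⟩
  simp_all

theorem dset_eq_dset_iff : Dset φ u v = Dset φ x y ↔
    φ u v = φ x y ∧ φ v u = φ y x ∨ φ u v = φ y x ∧ φ v u = φ x y :=
  Set.pair_eq_pair_iff

theorem CondU2.dset_eq_or (hU2 : CondU2 φ) (hxy : x ≠ y) (hxz : x ≠ z) (hyz : y ≠ z) :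
    Dset φ x y = Dset φ x z ∨ Dset φ x y = Dset φ y z ∨ Dset φ x z = Dset φ y z := by
  by_contra! h
  have := hU2 x y z hxy hxz hyz
  rw [Set.ncard_eq_three.2 ⟨_, _, _, h.1, h.2.1, h.2.2, rfl⟩] at this
  omega

theorem CondU2.dset_eq_of_path (hU2 : CondU2 φ) (hwx : w ≠ x) (hwy : w ≠ y) (hwz : w ≠ z)
    (hxz : x ≠ z) (hyz : y ≠ z) (hP : Dset φ w x = Dset φ y z)
    (hwy' : Dset φ w y ≠ Dset φ y z) (hwz' : Dset φ w z ≠ Dset φ y z)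
    (hxz' : Dset φ x z ≠ Dset φ y z) :
    Dset φ w y = Dset φ x z ∧ Dset φ w z = Dset φ x z := by
  have hwyz : Dset φ w y = Dset φ w z := by
    rcases hU2.dset_eq_or hwy hwz hyz with h | h | h
    exacts [h, absurd h hwy', absurd h hwz']
  have hwxz : Dset φ w z = Dset φ x z := by
    rcases hU2.dset_eq_or hwx hwz hxz with h | h | h
    exacts [absurd (h.symm.trans hP) hwz', absurd (h.symm.trans hP) hxz', h]
  exact ⟨hwyz.trans hwxz, hwxz⟩

theorem CondU2.exists_rev_FD3_of_FD3 (hU2 : CondU2 φ) (h : HasInducedCopy (Ggraph φ i) FD3) :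
    ∃ j, HasInducedCopy (Ggraph (revMap φ) (i, j)) FD3 := by
  obtain ⟨x, y, z, hxy, hxz, hyz, h⟩ := hasInducedCopy_FD3_iff.1 h
  -- `i` labels the pairs `xy` and `yz` but not `xz`, so by (U2) the first two share their labels
  have : φ y x = φ z y := by grind [hU2.dset_eq_or hxy hxz hyz, dset_eq_dset_iff]
  exact ⟨φ y x, hasInducedCopy_FD3_iff.2 ⟨x, y, z, hxy, hxz, hyz, by simp_all⟩⟩

theorem CondU2.not_hasInducedCopy_FA (hU2 : CondU2 φ) : ¬HasInducedCopy (Ggraph φ i) FA := by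
  intro h
  obtain ⟨x, y, z, hxy, hxz, hyz, h⟩ := hasInducedCopy_FA_iff.1 h
  -- the label sets of `xy`, `yz`, `xz` are `{i, φ y x}`, `{i}` and one without `i`
  grind [hU2.dset_eq_or hxy hxz hyz, dset_eq_dset_iff]

theorem CondU2.not_hasInducedCopy_FB (hU2 : CondU2 φ) : ¬HasInducedCopy (Ggraph φ i) FB := by
  intro h
  obtain ⟨x, y, z, hxy, hxz, hyz, h⟩ := hasInducedCopy_FB_iff.1 h
  grind [hU2.dset_eq_or hxy hxz hyz, dset_eq_dset_iff]

theorem CondU2.exists_rev_FD3_of_FD3c (hU2 : CondU2 φ) (h : HasInducedCopy (Ggraph φ i) FD3c) :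
    ∃ j, HasInducedCopy (Ggraph (revMap φ) (i, j)) FD3 := by
  obtain ⟨x, y, z, hxy, hxz, hyz, h⟩ := hasInducedCopy_FD3c_iff.1 h
  have : φ x y = φ y z := by grind [hU2.dset_eq_or hxy hxz hyz, dset_eq_dset_iff]
  refine ⟨φ x y, hasInducedCopy_FD3_iff.2 ⟨z, y, x, hyz.symm, hxz.symm, hxy.symm, ?_⟩⟩
  simp only [ne_eq, revMap_eq_iff]
  grind

theorem exists_rev_FC3_or_FD3_of_FC3_of_eq (hxy : x ≠ y) (hxz : x ≠ z) (hyz : y ≠ z)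
    (h : φ x y = i ∧ φ x z ≠ i ∧ φ y x ≠ i ∧ φ y z = i ∧ φ z x = i ∧ φ z y ≠ i)
    (heq : φ y x = φ z y) :
    ∃ j, HasInducedCopy (Ggraph (revMap φ) (i, j)) FC3 ∨
      HasInducedCopy (Ggraph (revMap φ) (i, j)) FD3 := by
  refine ⟨φ y x, ?_⟩
  by_cases h' : φ x z = φ y x
  · exact Or.inl (hasInducedCopy_FC3_iff.2 ⟨x, y, z, hxy, hxz, hyz, by simp_all⟩)
  · exact Or.inr (hasInducedCopy_FD3_iff.2 ⟨x, y, z, hxy, hxz, hyz, by simp_all⟩)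

theorem CondU2.exists_rev_FC3_or_FD3_of_FC3 (hU2 : CondU2 φ) (h : HasInducedCopy (Ggraph φ i) FC3) :
    ∃ j, HasInducedCopy (Ggraph (revMap φ) (i, j)) FC3 ∨
      HasInducedCopy (Ggraph (revMap φ) (i, j)) FD3 := by
  obtain ⟨x, y, z, hxy, hxz, hyz, h⟩ := hasInducedCopy_FC3_iff.1 h
  -- two of the reverse labels `φ y x`, `φ z y`, `φ x z` agree; rotate them to the front
  rcases hU2.dset_eq_or hxy hxz hyz with hD | hD | hD <;> rw [dset_eq_dset_iff] at hD
  · exact exists_rev_FC3_or_FD3_of_FC3_of_eq hxz.symm hyz.symm hxy (by grind) (by grind)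
  · exact exists_rev_FC3_or_FD3_of_FC3_of_eq hxy hxz hyz h (by grind)
  · exact exists_rev_FC3_or_FD3_of_FC3_of_eq hyz hxy.symm hxz.symm (by grind) (by grind)

theorem CondU2.exists_rev_FN_of_FNc (hU2 : CondU2 φ) (h : HasInducedCopy (Ggraph φ i) FNc) :
    ∃ j, HasInducedCopy (Ggraph (revMap φ) (i, j)) FN := by
  obtain ⟨w, x, y, z, hwx, hwy, hwz, hxy, hxz, hyz, h⟩ := hasInducedCopy_FNc_iff.1 h
  have h₁ : φ x w = φ x y := by grind [hU2.dset_eq_or hwx hwy hxy, dset_eq_dset_iff]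
  have h₂ : φ x y = φ z y := by grind [hU2.dset_eq_or hxy hxz hyz, dset_eq_dset_iff]
  refine ⟨φ x w, hasInducedCopy_FN_iff.2 ⟨z, y, x, w, hyz.symm, hxz.symm, hwz.symm, hxy.symm,
    hwy.symm, hwx.symm, ?_⟩⟩
  simp only [ne_eq, revMap_eq_iff]
  grind

theorem CondU2.exists_rev_FN_of_FN (hU2 : CondU2 φ) (h : HasInducedCopy (Ggraph φ i) FN) :
    ∃ j, HasInducedCopy (Ggraph (revMap φ) (i, j)) FN := by
  obtain ⟨w, x, y, z, hwx, hwy, hwz, hxy, hxz, hyz, h⟩ := hasInducedCopy_FN_iff.1 h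
  have h₁ : φ w x = φ y x := by grind [hU2.dset_eq_or hwx hwy hxy, dset_eq_dset_iff]
  have h₂ : φ y x = φ y z := by grind [hU2.dset_eq_or hxy hxz hyz, dset_eq_dset_iff]
  refine ⟨φ w x, hasInducedCopy_FN_iff.2 ⟨w, x, y, z, hwx, hwy, hwz, hxy, hxz, hyz, ?_⟩⟩
  simp only [ne_eq, revMap_eq_iff]
  grind

theorem hasInducedCopy_rev_FP4_of_FP4 (h : HasInducedCopy (Ggraph φ i) FP4) :
    HasInducedCopy (Ggraph (revMap φ) (i, i)) FP4 := by
  obtain ⟨w, x, y, z, hwx, hwy, hwz, hxy, hxz, hyz, h⟩ := hasInducedCopy_FP4_iff.1 h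
  exact hasInducedCopy_FP4_iff.2 ⟨w, x, y, z, hwx, hwy, hwz, hxy, hxz, hyz, by simp_all⟩

theorem CondU1.of_rev (hU2 : CondU2 φ) (h : CondU1 (revMap φ)) : CondU1 φ := by
  intro i
  refine ⟨fun hD3 => ?_, hU2.not_hasInducedCopy_FA, hU2.not_hasInducedCopy_FB, fun hD3c => ?_,
    fun hC3 => ?_, fun hNc => ?_, fun hN => ?_,
    fun hP4 => (h (i, i)).2.2.2.2.2.2.2 (hasInducedCopy_rev_FP4_of_FP4 hP4)⟩
  · obtain ⟨j, hj⟩ := hU2.exists_rev_FD3_of_FD3 hD3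
    exact (h (i, j)).1 hj
  · obtain ⟨j, hj⟩ := hU2.exists_rev_FD3_of_FD3c hD3c
    exact (h (i, j)).1 hj
  · obtain ⟨j, hj | hj⟩ := hU2.exists_rev_FC3_or_FD3_of_FC3 hC3
    exacts [(h (i, j)).2.2.2.2.1 hj, (h (i, j)).1 hj]
  · obtain ⟨j, hj⟩ := hU2.exists_rev_FN_of_FNc hNc
    exact (h (i, j)).2.2.2.2.2.2.1 hj
  · obtain ⟨j, hj⟩ := hU2.exists_rev_FN_of_FN hN
    exact (h (i, j)).2.2.2.2.2.2.1 hj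

theorem hasInducedCopy_FD3_of_rev_FD3 (hij : i ≠ j)
    (h : HasInducedCopy (Ggraph (revMap φ) (i, j)) FD3) :
    HasInducedCopy (Ggraph φ i) FD3 ∨ HasInducedCopy (Ggraph φ j) FD3 := by
  obtain ⟨x, y, z, hxy, hxz, hyz, h⟩ := hasInducedCopy_FD3_iff.1 h
  simp only [ne_eq, revMap_eq_iff] at h
  -- as `xz` is no arc of `G_{(i,j)}(rev g)`, its labels miss `i` or `j`
  by_cases hi : φ x z = i ∨ φ z x = i
  · exact Or.inr (hasInducedCopy_FD3_iff.2 ⟨z, y, x, hyz.symm, hxz.symm, hxy.symm, by grind⟩)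
  · exact Or.inl (hasInducedCopy_FD3_iff.2 ⟨x, y, z, hxy, hxz, hyz, by grind⟩)

theorem hasInducedCopy_FC3_of_rev_FC3 (hij : i ≠ j)
    (h : HasInducedCopy (Ggraph (revMap φ) (i, j)) FC3) : HasInducedCopy (Ggraph φ i) FC3 := by
  obtain ⟨x, y, z, hxy, hxz, hyz, h⟩ := hasInducedCopy_FC3_iff.1 h
  simp only [ne_eq, revMap_eq_iff] at h
  exact hasInducedCopy_FC3_iff.2 ⟨x, y, z, hxy, hxz, hyz, by grind⟩

theorem CondU2.hasInducedCopy_FN_of_rev_FN (hU2 : CondU2 φ) (hij : i ≠ j)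
    (h : HasInducedCopy (Ggraph (revMap φ) (i, j)) FN) :
    HasInducedCopy (Ggraph φ i) FN ∨ HasInducedCopy (Ggraph φ j) FN := by
  obtain ⟨w, x, y, z, hwx, hwy, hwz, hxy, hxz, hyz, h⟩ := hasInducedCopy_FN_iff.1 h
  simp only [ne_eq, revMap_eq_iff] at h
  -- the chords `wy`, `wz`, `xz` share their labels, which miss `i` or `j` as `xz` is no arc
  obtain ⟨hwy', hwz'⟩ := hU2.dset_eq_of_path hwx hwy hwz hxz hyz
    (by grind [dset_eq_dset_iff]) (by grind [dset_eq_dset_iff]) (by grind [dset_eq_dset_iff])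
    (by grind [dset_eq_dset_iff])
  rw [dset_eq_dset_iff] at hwy' hwz'
  by_cases hi : φ x z = i ∨ φ z x = i
  · exact Or.inr (hasInducedCopy_FN_iff.2 ⟨z, y, x, w, hyz.symm, hxz.symm, hwz.symm, hxy.symm,
      hwy.symm, hwx.symm, by grind⟩)
  · exact Or.inl (hasInducedCopy_FN_iff.2 ⟨w, x, y, z, hwx, hwy, hwz, hxy, hxz, hyz, by grind⟩)

theorem hasInducedCopy_FD3c_or_FNc_of_xor_chords (hwy : w ≠ y) (hwz : w ≠ z) (hxz : x ≠ z)
    (hpath : φ w x = i ∧ φ x w = i ∧ φ x y = i ∧ φ y x = i ∧ φ y z = i ∧ φ z y = i)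
    (hwy' : Xor (φ w y = i) (φ y w = i)) (hwz' : Xor (φ w z = i) (φ z w = i))
    (hxz' : Xor (φ x z = i) (φ z x = i)) :
    HasInducedCopy (Ggraph φ i) FD3c ∨ HasInducedCopy (Ggraph φ i) FNc := by
  -- `D̄₃` sits on `w x z` when `z` heads one of its two chords and tails the other, and likewise
  -- on `w y z` for `w`; otherwise all chords run from `{w, x}` to `{y, z}` or all back: `N̄`.
  obtain ⟨hwx, hxw, hxy, hyx, hyz, hzy⟩ := hpath
  rcases hwz' with ⟨hwz', hzw'⟩ | ⟨hzw', hwz'⟩ <;> rcases hxz' with ⟨hxz', hzx'⟩ | ⟨hzx', hxz'⟩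
  · rcases hwy' with ⟨hwy', hyw'⟩ | ⟨hyw', hwy'⟩
    · exact Or.inr (hasInducedCopy_FNc_iff.2 ⟨x, z, w, y, by grind⟩)
    · exact Or.inl (hasInducedCopy_FD3c_iff.2 ⟨z, w, y, by grind⟩)
  · exact Or.inl (hasInducedCopy_FD3c_iff.2 ⟨x, z, w, by grind⟩)
  · exact Or.inl (hasInducedCopy_FD3c_iff.2 ⟨w, z, x, by grind⟩)
  · rcases hwy' with ⟨hwy', hyw'⟩ | ⟨hyw', hwy'⟩
    · exact Or.inl (hasInducedCopy_FD3c_iff.2 ⟨y, w, z, by grind⟩)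
    · exact Or.inr (hasInducedCopy_FNc_iff.2 ⟨y, w, z, x, by grind⟩)

theorem CondU2.hasInducedCopy_FP4_or_FD3c_or_FNc_of_rev_FP4 (hU2 : CondU2 φ)
    (h : HasInducedCopy (Ggraph (revMap φ) (i, i)) FP4) :
    HasInducedCopy (Ggraph φ i) FP4 ∨ HasInducedCopy (Ggraph φ i) FD3c ∨
      HasInducedCopy (Ggraph φ i) FNc := by
  obtain ⟨w, x, y, z, hwx, hwy, hwz, hxy, hxz, hyz, h⟩ := hasInducedCopy_FP4_iff.1 h
  simp only [ne_eq, revMap_eq_iff] at h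
  -- the chords `wy`, `wz`, `xz` share a label set other than `{i}`: either it misses `i`, or
  -- each chord carries `i` in exactly one direction
  obtain ⟨hwy', hwz'⟩ := hU2.dset_eq_of_path hwx hwy hwz hxz hyz
    (by grind [dset_eq_dset_iff]) (by grind [dset_eq_dset_iff]) (by grind [dset_eq_dset_iff])
    (by grind [dset_eq_dset_iff])
  rw [dset_eq_dset_iff] at hwy' hwz'
  by_cases hi : φ x z = i ∨ φ z x = i
  · exact Or.inr (hasInducedCopy_FD3c_or_FNc_of_xor_chords hwy hwz hxz (by grind)
      (by unfold Xor; grind) (by unfold Xor; grind) (by unfold Xor; grind))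
  · exact Or.inl (hasInducedCopy_FP4_iff.2 ⟨w, x, y, z, hwx, hwy, hwz, hxy, hxz, hyz, by grind⟩)

theorem CondU1.rev (hU2 : CondU2 φ) (h : CondU1 φ) : CondU1 (revMap φ) := by
  rintro ⟨i, j⟩
  obtain rfl | hij := eq_or_ne i j
  · have hsymm {n : ℕ} {K : Fin n → Fin n → Prop} (hK : ∃ k l, K k l ∧ ¬K l k) :
        ¬HasInducedCopy (Ggraph (revMap φ) (i, i)) K :=
      not_hasInducedCopy_of_symm ggraph_revMap_symm hK
    refine ⟨hsymm (by unfold FD3 relOf; decide), hsymm (by unfold FA relOf; decide),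
      hsymm (by unfold FB relOf; decide), hsymm (by unfold FD3c relOf; decide),
      hsymm (by unfold FC3 relOf; decide), hsymm (by unfold FNc relOf; decide),
      hsymm (by unfold FN relOf; decide), fun hP4 => ?_⟩
    rcases hU2.hasInducedCopy_FP4_or_FD3c_or_FNc_of_rev_FP4 hP4 with hc | hc | hc
    exacts [(h i).2.2.2.2.2.2.2 hc, (h i).2.2.2.1 hc, (h i).2.2.2.2.2.1 hc]
  · have hasymm {n : ℕ} {K : Fin n → Fin n → Prop} (hK : ∃ k l, k ≠ l ∧ K k l ∧ K l k) :
        ¬HasInducedCopy (Ggraph (revMap φ) (i, j)) K :=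
      not_hasInducedCopy_of_asymm (ggraph_revMap_asymm hij) hK
    refine ⟨fun hD3 => ?_, hasymm (by unfold FA relOf; decide), hasymm (by unfold FB relOf; decide),
      hasymm (by unfold FD3c relOf; decide),
      fun hC3 => (h i).2.2.2.2.1 (hasInducedCopy_FC3_of_rev_FC3 hij hC3),
      hasymm (by unfold FNc relOf; decide), fun hN => ?_, hasymm (by unfold FP4 relOf; decide)⟩
    · rcases hasInducedCopy_FD3_of_rev_FD3 hij hD3 with hc | hc
      exacts [(h i).1 hc, (h j).1 hc]
    · rcases hU2.hasInducedCopy_FN_of_rev_FN hij hN with hc | hc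
      exacts [(h i).2.2.2.2.2.2.1 hc, (h j).2.2.2.2.2.2.1 hc]

end TwoStructure

/-- Lemma: assuming (U2), the monochromatic digraphs of `g` are all di-cographs
iff the monochromatic digraphs of `rev(g)` are all di-cographs. -/
theorem condU1_iff_rev {V Υ : Type*} (φ : V → V → Υ) (hU2 : CondU2 φ) :
    CondU1 φ ↔ CondU1 (revMap φ) :=
  ⟨CondU1.rev hU2, CondU1.of_rev hU2⟩
end
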